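/- For any unitary U on ℂ^(2^n) and any Clifford unitary V on ℂ^(2^m), the Pauli instability satisfies 𝕀(U⊗V) = 𝕀(U). -/

import Mathlib

open Matrix Complex

noncomputable section

/-- The four single-qubit Pauli matrices `I, X, Y, Z`. -/
def pauliMat : Fin 4 → Matrix (Fin 2) (Fin 2) ℂ
  | 0 => 1
  | 1 => !![0, 1; 1, 0]
  | 2 => !![0, -Complex.I; Complex.I, 0]
  | 3 => !![1, 0; 0, -1]

/-- The `k`-th binary digit of `i : Fin (2^n)`. -/
def qubit {n : ℕ} (k : Fin n) (i : Fin (2 ^ n)) : Fin 2 :=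
  ⟨(i : ℕ) / 2 ^ (k : ℕ) % 2, Nat.mod_lt _ (by norm_num)⟩

/-- `n`-fold Kronecker product of single-qubit matrices, as a `2^n × 2^n` matrix. -/
def nfold (n : ℕ) (f : Fin n → Matrix (Fin 2) (Fin 2) ℂ) :
    Matrix (Fin (2 ^ n)) (Fin (2 ^ n)) ℂ :=
  Matrix.of fun i j => ∏ k : Fin n, f k (qubit k i) (qubit k j)

/-- The `n`-qubit Pauli string `P⁽¹⁾ ⊗ ⋯ ⊗ P⁽ⁿ⁾` labelled by `s : Fin n → Fin 4`. -/
def PauliString (n : ℕ) (s : Fin n → Fin 4) : Matrix (Fin (2 ^ n)) (Fin (2 ^ n)) ℂ :=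
  nfold n fun k => pauliMat (s k)

/-- The out-of-time-ordered correlator `2^{-n}·Tr(U†P₁U·P₂·U†P₁U·P₂)`. -/
def OTOC (n : ℕ) (U P₁ P₂ : Matrix (Fin (2 ^ n)) (Fin (2 ^ n)) ℂ) : ℂ :=
  (2 ^ n : ℂ)⁻¹ * (Uᴴ * P₁ * U * P₂ * Uᴴ * P₁ * U * P₂).trace

/-- The Pauli instability `𝕀(U) = -log( 16^{-n} Σ_{P₁,P₂} |OTOC(U,P₁,P₂)| )`. -/
def pauliInstability (n : ℕ) (U : Matrix (Fin (2 ^ n)) (Fin (2 ^ n)) ℂ) : ℝ :=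
  -Real.log ((16 ^ n : ℝ)⁻¹ * ∑ s₁ : Fin n → Fin 4, ∑ s₂ : Fin n → Fin 4,
      ‖OTOC n U (PauliString n s₁) (PauliString n s₂)‖)

/-- `V` is Clifford: it maps every Pauli string to a Pauli string up to a phase. -/
def IsClifford (n : ℕ) (V : Matrix (Fin (2 ^ n)) (Fin (2 ^ n)) ℂ) : Prop :=
  ∀ s : Fin n → Fin 4, ∃ (s' : Fin n → Fin 4) (φ : ℝ),
    Vᴴ * PauliString n s * V = Complex.exp (-(φ * Complex.I)) • PauliString n s'


/-- Kronecker product of a `2^n × 2^n` matrix with a `2^m × 2^m` matrix, realized as a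
`2^(n+m) × 2^(n+m)` matrix. -/
def kron (n m : ℕ) (A : Matrix (Fin (2 ^ n)) (Fin (2 ^ n)) ℂ)
    (B : Matrix (Fin (2 ^ m)) (Fin (2 ^ m)) ℂ) :
    Matrix (Fin (2 ^ (n + m))) (Fin (2 ^ (n + m))) ℂ :=
  Matrix.reindex (finProdFinEquiv.trans (finCongr (pow_add 2 n m).symm))
    (finProdFinEquiv.trans (finCongr (pow_add 2 n m).symm))
    (Matrix.kroneckerMap (· * ·) A B)

/-! ### Auxiliary lemmas -/

/-- Multiplication table for Pauli labels. -/
def pmul : Fin 4 → Fin 4 → Fin 4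
  | 0,0 => 0 | 0,1 => 1 | 0,2 => 2 | 0,3 => 3
  | 1,0 => 1 | 1,1 => 0 | 1,2 => 3 | 1,3 => 2
  | 2,0 => 2 | 2,1 => 3 | 2,2 => 0 | 2,3 => 1
  | 3,0 => 3 | 3,1 => 2 | 3,2 => 1 | 3,3 => 0

/-- Phase table for Pauli multiplication. -/
def pc : Fin 4 → Fin 4 → ℂ
  | 1, 2 => Complex.I | 1, 3 => -Complex.I
  | 2, 1 => -Complex.I | 2, 3 => Complex.I
  | 3, 1 => Complex.I | 3, 2 => -Complex.I
  | _, _ => 1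

lemma pauli_mul (a b : Fin 4) : pauliMat a * pauliMat b = pc a b • pauliMat (pmul a b) := by
  fin_cases a <;> fin_cases b <;>
    simp only [pauliMat, pc, pmul] <;>
    ext i j <;> fin_cases i <;> fin_cases j <;>
    simp [Matrix.mul_apply, Fin.sum_univ_two, Complex.ext_iff]

lemma pc_abs (a b : Fin 4) : ‖pc a b‖ = 1 := by
  fin_cases a <;> fin_cases b <;> simp [pc]

lemma pmul_self (a : Fin 4) : pmul a a = 0 := by fin_cases a <;> rfl
lemma pc_self (a : Fin 4) : pc a a = 1 := by fin_cases a <;> rfl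

lemma qubit_eq {n : ℕ} (k : Fin n) (i : Fin (2 ^ n)) :
    qubit k i = finFunctionFinEquiv.symm i k := by
  ext; simp [qubit, finFunctionFinEquiv]

lemma qubit_apply {n : ℕ} (f : Fin n → Fin 2) (k : Fin n) :
    qubit k (finFunctionFinEquiv f) = f k := by
  rw [qubit_eq, Equiv.symm_apply_apply]

lemma nfold_mul {n : ℕ} (f g : Fin n → Matrix (Fin 2) (Fin 2) ℂ) :
    nfold n f * nfold n g = nfold n (fun k => f k * g k) := by
  ext i j
  simp only [nfold, Matrix.mul_apply, Matrix.of_apply]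
  rw [← Equiv.sum_comp (finFunctionFinEquiv : (Fin n → Fin 2) ≃ Fin (2 ^ n))]
  simp only [qubit_apply, ← Finset.prod_mul_distrib]
  rw [Finset.prod_univ_sum]
  simp [Fintype.piFinset_univ]

lemma qubit_inj {n : ℕ} {i j : Fin (2 ^ n)} (h : ∀ k, qubit k i = qubit k j) : i = j :=
  finFunctionFinEquiv.symm.injective (funext fun k => by
    rw [← qubit_eq, ← qubit_eq]; exact h k)

lemma nfold_one (n : ℕ) : nfold n (fun _ => 1) = 1 := by
  ext i j
  simp only [nfold, Matrix.of_apply, Matrix.one_apply]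
  by_cases h : i = j
  · subst h; simp
  · rw [if_neg h]
    obtain ⟨k, hk⟩ : ∃ k, qubit k i ≠ qubit k j := by
      by_contra hc; push_neg at hc; exact h (qubit_inj hc)
    exact Finset.prod_eq_zero (Finset.mem_univ k) (if_neg hk)

lemma nfold_smul {n : ℕ} (c : Fin n → ℂ) (f : Fin n → Matrix (Fin 2) (Fin 2) ℂ) :
    nfold n (fun k => c k • f k) = (∏ k, c k) • nfold n f := by
  ext i j
  simp [nfold, Finset.prod_mul_distrib]

lemma pauliString_mul {n : ℕ} (s t : Fin n → Fin 4) :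
    PauliString n s * PauliString n t =
      (∏ k, pc (s k) (t k)) • PauliString n (fun k => pmul (s k) (t k)) := by
  unfold PauliString
  rw [nfold_mul]
  simp only [pauli_mul]
  exact nfold_smul _ _

lemma pauliString_sq {n : ℕ} (s : Fin n → Fin 4) :
    PauliString n s * PauliString n s = 1 := by
  rw [pauliString_mul]
  simp only [pc_self, pmul_self, Finset.prod_const_one, one_smul]
  show nfold n (fun _ => pauliMat 0) = 1
  exact nfold_one n

/-! ### kron lemmas -/

lemma trace_reindex {α : Type*} [Fintype α] {β : Type*} [Fintype β]
    (e : α ≃ β) (M : Matrix α α ℂ) : (Matrix.reindex e e M).trace = M.trace := by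
  simp only [Matrix.trace, Matrix.diag, Matrix.reindex_apply, Matrix.submatrix_apply]
  exact Equiv.sum_comp e.symm fun j => M j j

lemma kron_mul {n m : ℕ} (A A' : Matrix (Fin (2 ^ n)) (Fin (2 ^ n)) ℂ)
    (B B' : Matrix (Fin (2 ^ m)) (Fin (2 ^ m)) ℂ) :
    kron n m A B * kron n m A' B' = kron n m (A * A') (B * B') := by
  unfold kron
  simp only [Matrix.reindex_apply]
  rw [Matrix.submatrix_mul_equiv, Matrix.mul_kronecker_mul]

lemma kron_conjTranspose {n m : ℕ} (A : Matrix (Fin (2 ^ n)) (Fin (2 ^ n)) ℂ)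
    (B : Matrix (Fin (2 ^ m)) (Fin (2 ^ m)) ℂ) :
    (kron n m A B)ᴴ = kron n m Aᴴ Bᴴ := by
  unfold kron
  simp only [Matrix.reindex_apply, Matrix.conjTranspose_submatrix]
  ext i j
  simp [Matrix.kroneckerMap, Matrix.conjTranspose_apply, mul_comm]

lemma kron_trace {n m : ℕ} (A : Matrix (Fin (2 ^ n)) (Fin (2 ^ n)) ℂ)
    (B : Matrix (Fin (2 ^ m)) (Fin (2 ^ m)) ℂ) :
    (kron n m A B).trace = A.trace * B.trace := by
  unfold kron
  rw [trace_reindex]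
  exact Matrix.trace_kronecker A B

/-! ### index plumbing -/

def qlow (n m : ℕ) (k : Fin m) : Fin (n + m) := ⟨k.1, by omega⟩
def qhigh (n m : ℕ) (k : Fin n) : Fin (n + m) := ⟨m + k.1, by omega⟩

def iLow {n m : ℕ} (i : Fin (2 ^ (n + m))) : Fin (2 ^ m) :=
  ⟨(i : ℕ) % 2 ^ m, Nat.mod_lt _ (Nat.pow_pos (by norm_num))⟩
def iHigh {n m : ℕ} (i : Fin (2 ^ (n + m))) : Fin (2 ^ n) :=
  ⟨(i : ℕ) / 2 ^ m, by
    have h := i.2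
    have h2 : (2:ℕ) ^ (n + m) = 2 ^ m * 2 ^ n := by rw [← pow_add, add_comm]
    exact Nat.div_lt_of_lt_mul (by omega)⟩

lemma esymm {n m : ℕ} (i : Fin (2 ^ (n + m))) :
    (finProdFinEquiv.trans (finCongr (pow_add 2 n m).symm)).symm i = (iHigh i, iLow i) := by
  rw [Equiv.symm_trans_apply]
  refine Prod.ext (Fin.ext ?_) (Fin.ext ?_) <;>
    simp [Fin.divNat, Fin.modNat, iHigh, iLow, finCongr]

lemma bit_mod {m : ℕ} (c : ℕ) {k : ℕ} (h : k < m) :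
    c % 2 ^ m / 2 ^ k % 2 = c / 2 ^ k % 2 := by
  have h2 : (2 : ℕ) ^ m = 2 ^ k * 2 ^ (m - k) := by rw [← pow_add]; congr 1; omega
  rw [h2, Nat.mod_mul_right_div_self,
    Nat.mod_mod_of_dvd _ (dvd_pow_self 2 (Nat.sub_ne_zero_of_lt h))]

lemma qubit_iLow {n m : ℕ} (k : Fin m) (i : Fin (2 ^ (n + m))) :
    qubit k (iLow i) = qubit (qlow n m k) i := Fin.ext (bit_mod _ k.2)

lemma qubit_iHigh {n m : ℕ} (k : Fin n) (i : Fin (2 ^ (n + m))) :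
    qubit k (iHigh i) = qubit (qhigh n m k) i := by
  refine Fin.ext ?_
  show (i : ℕ) / 2 ^ m / 2 ^ (k : ℕ) % 2 = (i : ℕ) / 2 ^ (m + (k : ℕ)) % 2
  rw [Nat.div_div_eq_div_mul, ← pow_add]

def qsum (n m : ℕ) : Fin m ⊕ Fin n ≃ Fin (n + m) :=
  finSumFinEquiv.trans (finCongr (add_comm m n))

lemma qsum_inl {n m : ℕ} (k : Fin m) : qsum n m (Sum.inl k) = qlow n m k := by
  refine Fin.ext ?_; simp [qsum, qlow]

lemma qsum_inr {n m : ℕ} (k : Fin n) : qsum n m (Sum.inr k) = qhigh n m k := by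
  refine Fin.ext ?_; simp [qsum, qhigh, add_comm]

lemma pauliString_split (n m : ℕ) (s : Fin (n + m) → Fin 4) :
    PauliString (n + m) s =
      kron n m (PauliString n fun k => s (qhigh n m k))
        (PauliString m fun k => s (qlow n m k)) := by
  ext i j
  rw [kron, Matrix.reindex_apply, Matrix.submatrix_apply, esymm, esymm,
    Matrix.kroneckerMap_apply]
  show (∏ k : Fin (n + m), pauliMat (s k) (qubit k i) (qubit k j)) = _
  rw [← Equiv.prod_comp (qsum n m)
    (fun k => pauliMat (s k) (qubit k i) (qubit k j)), Fintype.prod_sum_type]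
  simp only [qsum_inl, qsum_inr]
  rw [mul_comm]
  congr 1
  · show _ = ∏ k : Fin n, pauliMat (s (qhigh n m k)) (qubit k (iHigh i)) (qubit k (iHigh j))
    exact Finset.prod_congr rfl fun k _ => by rw [qubit_iHigh, qubit_iHigh]
  · show _ = ∏ k : Fin m, pauliMat (s (qlow n m k)) (qubit k (iLow i)) (qubit k (iLow j))
    exact Finset.prod_congr rfl fun k _ => by rw [qubit_iLow, qubit_iLow]

/-! ### OTOC lemmas -/

lemma otoc_kron {n m : ℕ} (U P₁ P₂ : Matrix (Fin (2 ^ n)) (Fin (2 ^ n)) ℂ)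
    (V Q₁ Q₂ : Matrix (Fin (2 ^ m)) (Fin (2 ^ m)) ℂ) :
    OTOC (n + m) (kron n m U V) (kron n m P₁ Q₁) (kron n m P₂ Q₂) =
      OTOC n U P₁ P₂ * OTOC m V Q₁ Q₂ := by
  unfold OTOC
  rw [kron_conjTranspose, kron_mul, kron_mul, kron_mul, kron_mul, kron_mul, kron_mul,
    kron_mul, kron_trace]
  have h2 : (2 : ℂ) ^ (n + m) = 2 ^ n * 2 ^ m := by rw [pow_add]
  rw [h2, mul_inv]
  ring

lemma otoc_clifford_abs {m : ℕ} {V : Matrix (Fin (2 ^ m)) (Fin (2 ^ m)) ℂ}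
    (hC : IsClifford m V) (s₁ s₂ : Fin m → Fin 4) :
    ‖OTOC m V (PauliString m s₁) (PauliString m s₂)‖ = 1 := by
  obtain ⟨s', φ, h⟩ := hC s₁
  have key : Vᴴ * PauliString m s₁ * V * PauliString m s₂ * Vᴴ * PauliString m s₁ * V *
        PauliString m s₂ =
      (Vᴴ * PauliString m s₁ * V * PauliString m s₂) *
        (Vᴴ * PauliString m s₁ * V * PauliString m s₂) := by
    simp only [Matrix.mul_assoc]
  have h1 : Vᴴ * PauliString m s₁ * V * PauliString m s₂ =
      (Complex.exp (-(φ * Complex.I)) * ∏ k, pc (s' k) (s₂ k)) •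
        PauliString m (fun k => pmul (s' k) (s₂ k)) := by
    rw [h, Matrix.smul_mul, pauliString_mul, smul_smul]
  rw [OTOC, key, h1, smul_mul_smul_comm, pauliString_sq, Matrix.trace_smul, Matrix.trace_one]
  have hcard : (Fintype.card (Fin (2 ^ m)) : ℂ) = 2 ^ m := by simp
  rw [smul_eq_mul, hcard]
  simp only [norm_mul, norm_inv, norm_pow, Complex.norm_prod, Complex.norm_two, Complex.norm_exp]
  have hre : (-(↑φ * Complex.I)).re = 0 := by simp
  have hc : ∏ k, ‖pc (s' k) (s₂ k)‖ = 1 :=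
    Finset.prod_eq_one fun k _ => pc_abs _ _
  rw [hre, Real.exp_zero, hc]
  have hp : (0 : ℝ) < 2 ^ m := by positivity
  field_simp

/-! ### the function-label equivalence -/

def fEquiv (n m : ℕ) : ((Fin m → Fin 4) × (Fin n → Fin 4)) ≃ (Fin (n + m) → Fin 4) :=
  (Equiv.sumArrowEquivProdArrow (Fin m) (Fin n) (Fin 4)).symm.trans
    (Equiv.arrowCongr (qsum n m) (Equiv.refl (Fin 4)))

lemma fEquiv_high {n m : ℕ} (p : (Fin m → Fin 4) × (Fin n → Fin 4)) (k : Fin n) :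
    fEquiv n m p (qhigh n m k) = p.2 k := by
  have : qhigh n m k = qsum n m (Sum.inr k) := (qsum_inr k).symm
  rw [this]
  simp [fEquiv, Equiv.sumArrowEquivProdArrow]

lemma fEquiv_low {n m : ℕ} (p : (Fin m → Fin 4) × (Fin n → Fin 4)) (k : Fin m) :
    fEquiv n m p (qlow n m k) = p.1 k := by
  have : qlow n m k = qsum n m (Sum.inl k) := (qsum_inl k).symm
  rw [this]
  simp [fEquiv, Equiv.sumArrowEquivProdArrow]

lemma pauliString_fEquiv {n m : ℕ} (p : (Fin m → Fin 4) × (Fin n → Fin 4)) :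
    PauliString (n + m) (fEquiv n m p) =
      kron n m (PauliString n p.2) (PauliString m p.1) := by
  have h2 : (fun k => fEquiv n m p (qhigh n m k)) = p.2 := funext (fEquiv_high p)
  have h1 : (fun k => fEquiv n m p (qlow n m k)) = p.1 := funext (fEquiv_low p)
  rw [pauliString_split, h2, h1]

/-! ### main theorem -/

/-- For any unitary `U` on `ℂ^(2^n)` and any Clifford unitary `V` on
`ℂ^(2^m)`, the Pauli instability satisfies `𝕀(U⊗V) = 𝕀(U)`. -/
theorem pauliInstability_kron_clifford (n m : ℕ)
    (U : Matrix (Fin (2 ^ n)) (Fin (2 ^ n)) ℂ)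
    (V : Matrix (Fin (2 ^ m)) (Fin (2 ^ m)) ℂ)
    (hU : U ∈ Matrix.unitaryGroup (Fin (2 ^ n)) ℂ)
    (hV : V ∈ Matrix.unitaryGroup (Fin (2 ^ m)) ℂ)
    (hC : IsClifford m V) :
    pauliInstability (n + m) (kron n m U V) = pauliInstability n U := by
  unfold pauliInstability
  congr 2
  set W := kron n m U V with hW
  set F : (Fin (n + m) → Fin 4) → (Fin (n + m) → Fin 4) → ℝ := fun s₁ s₂ =>
    ‖OTOC (n + m) W (PauliString (n + m) s₁) (PauliString (n + m) s₂)‖ with hF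
  set G : (Fin n → Fin 4) → (Fin n → Fin 4) → ℝ := fun a₁ a₂ =>
    ‖OTOC n U (PauliString n a₁) (PauliString n a₂)‖ with hG
  have hFE : ∀ p₁ p₂ : (Fin m → Fin 4) × (Fin n → Fin 4),
      F (fEquiv n m p₁) (fEquiv n m p₂) = G p₁.2 p₂.2 := by
    intro p₁ p₂
    simp only [hF, hG, pauliString_fEquiv]
    rw [otoc_kron, norm_mul, otoc_clifford_abs hC, mul_one]
  have hsum : ∑ s₁ : Fin (n + m) → Fin 4, ∑ s₂ : Fin (n + m) → Fin 4, F s₁ s₂ =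
      ∑ p₁ : (Fin m → Fin 4) × (Fin n → Fin 4),
        ∑ p₂ : (Fin m → Fin 4) × (Fin n → Fin 4), F (fEquiv n m p₁) (fEquiv n m p₂) := by
    rw [← Equiv.sum_comp (fEquiv n m) (fun s₁ => ∑ s₂, F s₁ s₂)]
    exact Finset.sum_congr rfl fun p₁ _ => (Equiv.sum_comp (fEquiv n m) _).symm
  change (16 ^ (n + m) : ℝ)⁻¹ * ∑ s₁, ∑ s₂, F s₁ s₂ = (16 ^ n : ℝ)⁻¹ * ∑ a₁, ∑ a₂, G a₁ a₂
  simp only [hsum, hFE]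
  have hcollapse : ∑ p₁ : (Fin m → Fin 4) × (Fin n → Fin 4),
      ∑ p₂ : (Fin m → Fin 4) × (Fin n → Fin 4), G p₁.2 p₂.2 =
      (4 ^ m * 4 ^ m : ℝ) * ∑ a₁ : Fin n → Fin 4, ∑ a₂ : Fin n → Fin 4, G a₁ a₂ := by
    simp only [Fintype.sum_prod_type, Finset.sum_const, Finset.card_univ, Fintype.card_fun,
      Fintype.card_fin, nsmul_eq_mul]
    push_cast
    rw [← Finset.mul_sum]
    ring
  rw [hcollapse]
  have h4 : ((4 : ℝ) ^ m) ≠ 0 := by positivity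
  have h16 : (16 : ℝ) ^ (n + m) = 16 ^ n * (4 ^ m * 4 ^ m) := by
    rw [pow_add]
    congr 1
    rw [← mul_pow]
    norm_num
  rw [h16, mul_inv]
  field_simp

end
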